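/- Let (c_j)_{j ≥ 1} be a nonincreasing sequence of strictly positive reals with Σ_j c_j³ < ∞ and Σ_j c_j² = ∞, and set C := Σ_j c_j³. For n ≥ 1 and l ∈ ℕ, let x^{(n,l)} := (c_1 n^{-1/3}, …, c_l n^{-1/3}). Then there exists a sequence l(n) → ∞ with Σ_{i=1}^{l(n)} c_i² / n^{1/3} → 1, and for any such choice, writing x^{(n)} = x^{(n, l(n))} and σ_r = Σ_i (x_i^{(n)})^r: (i) σ_2 → 0; (ii) σ_3 / σ_2³ → C; and (iii) x_j^{(n)} / σ_2 → c_j for every fixed j ≥ 1, as n → ∞. Thus the parameter (κ, c) with κ = 0 and c ∈ ℓ³ \ ℓ² arises from the entrance-law hypotheses. -/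

import Mathlib

open Filter Topology

/-!
Since `σ_r(x^{(n,l)}) = (Σ_{i<l} c_i^r) / n^{r/3}`, all three limits are algebraic consequences
of `ρ_n := Σ_{i<l(n)} c_i² / n^{1/3} → 1`: `σ₂ = ρ_n / n^{1/3}`,
`σ₃ / σ₂³ = Σ_{i<l(n)} c_i³ / ρ_n³` and `x_j / σ₂ = c_j / ρ_n`. An admissible `l(n)` is the first
index at which the partial sums of `c_i²` reach `n^{1/3}`; as `c` is nonincreasing they overshoot
by at most `c_1²`.
-/

/-- The `j`-th entry of the configuration `x^{(n,l)} = (c_1 n^{-1/3}, …, c_l n^{-1/3})`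
(entries beyond the length `l` are `0`). -/
noncomputable def dustEntry (c : ℕ → ℝ) (l n j : ℕ) : ℝ :=
  if j < l then c j * (n : ℝ) ^ (-(1 : ℝ) / 3) else 0

/-- `σ_r(x^{(n,l)})`, the sum of the `r`-th powers of the `l` entries of `x^{(n,l)}`. -/
noncomputable def dustSigma (c : ℕ → ℝ) (r l n : ℕ) : ℝ :=
  ∑ j ∈ Finset.range l, dustEntry c l n j ^ r

lemma apply_find_le_max {S : ℕ → ℝ} {B t : ℝ} (hB : ∀ k, S (k + 1) ≤ S k + B)
    (h : ∃ k, t ≤ S k) : S (Nat.find h) ≤ max (S 0) (t + B) := by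
  rcases hk : Nat.find h with _ | k
  · exact le_max_left _ _
  · have hlt : S k < t := not_le.mp (Nat.find_min h (by omega))
    exact (hB k).trans (by linarith [le_max_right (S 0) (t + B)])

lemma Monotone.exists_tendsto_comp_div_one {α : Type*} {F : Filter α} {S : ℕ → ℝ} {B : ℝ}
    (hS : Monotone S) (hS_top : Tendsto S atTop atTop) (hB : ∀ k, S (k + 1) ≤ S k + B)
    {a : α → ℝ} (ha : Tendsto a F atTop) :
    ∃ l : α → ℕ, Tendsto l F atTop ∧ Tendsto (fun x => S (l x) / a x) F (𝓝 1) := by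
  have hex : ∀ x, ∃ k, a x ≤ S k := fun x => (hS_top.eventually_ge_atTop (a x)).exists
  refine ⟨fun x => Nat.find (hex x), tendsto_atTop.mpr fun m => ?_, ?_⟩
  · filter_upwards [ha.eventually_gt_atTop (S m)] with x hx
    by_contra! hlt
    linarith [Nat.find_spec (hex x), hS hlt.le]
  · have hupper : Tendsto (fun x => 1 + B / a x) F (𝓝 1) := by
      simpa using tendsto_const_nhds.add (tendsto_const_nhds.div_atTop ha)
    refine tendsto_of_tendsto_of_tendsto_of_le_of_le' tendsto_const_nhds hupper ?_ ?_
    · filter_upwards [ha.eventually_gt_atTop 0] with x hx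
      exact (one_le_div hx).mpr (Nat.find_spec (hex x))
    · filter_upwards [ha.eventually_gt_atTop 0, ha.eventually_ge_atTop (S 0 - B)] with x hx h0
      rw [div_le_iff₀ hx, add_mul, div_mul_cancel₀ _ hx.ne', one_mul]
      exact (apply_find_le_max hB (hex x)).trans (max_le (by linarith) (by linarith))

lemma dustEntry_of_lt (c : ℕ → ℝ) {l j : ℕ} (n : ℕ) (hj : j < l) :
    dustEntry c l n j = c j / (n : ℝ) ^ ((1 : ℝ) / 3) := by
  rw [dustEntry, if_pos hj, neg_div, Real.rpow_neg n.cast_nonneg, ← div_eq_mul_inv]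

lemma dustSigma_eq_sum_div (c : ℕ → ℝ) (r l n : ℕ) :
    dustSigma c r l n = (∑ j ∈ Finset.range l, c j ^ r) / ((n : ℝ) ^ ((1 : ℝ) / 3)) ^ r := by
  rw [dustSigma, Finset.sum_div]
  refine Finset.sum_congr rfl fun j hj => ?_
  rw [dustEntry_of_lt c n (Finset.mem_range.mp hj), div_pow]

lemma tendsto_rpow_one_third_atTop :
    Tendsto (fun n : ℕ => (n : ℝ) ^ ((1 : ℝ) / 3)) atTop atTop :=
  (tendsto_rpow_atTop (by norm_num)).comp tendsto_natCast_atTop_atTop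

lemma eventually_rpow_one_third_ne_zero : ∀ᶠ n : ℕ in atTop, (n : ℝ) ^ ((1 : ℝ) / 3) ≠ 0 :=
  (tendsto_rpow_one_third_atTop.eventually_gt_atTop 0).mono fun _ h => h.ne'

section Asymptotics

variable {c : ℕ → ℝ} {l : ℕ → ℕ}

lemma tendsto_dustSigma_two_zero
    (hratio : Tendsto (fun n : ℕ => (∑ i ∈ Finset.range (l n), c i ^ 2) / (n : ℝ) ^ ((1 : ℝ) / 3))
      atTop (𝓝 1)) :
    Tendsto (fun n => dustSigma c 2 (l n) n) atTop (𝓝 0) := by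
  have h := hratio.mul tendsto_rpow_one_third_atTop.inv_tendsto_atTop
  rw [one_mul] at h
  refine h.congr fun n => ?_
  rw [dustSigma_eq_sum_div, Pi.inv_apply]
  ring

lemma tendsto_dustSigma_three_div_cube {C : ℝ} (hC : HasSum (fun j => c j ^ 3) C)
    (hl : Tendsto l atTop atTop)
    (hratio : Tendsto (fun n : ℕ => (∑ i ∈ Finset.range (l n), c i ^ 2) / (n : ℝ) ^ ((1 : ℝ) / 3))
      atTop (𝓝 1)) :
    Tendsto (fun n => dustSigma c 3 (l n) n / dustSigma c 2 (l n) n ^ 3) atTop (𝓝 C) := by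
  have h := (hC.tendsto_sum_nat.comp hl).div (hratio.pow 3) (by norm_num)
  rw [one_pow, div_one] at h
  refine h.congr' ?_
  filter_upwards [eventually_rpow_one_third_ne_zero] with n hn
  simp only [Pi.div_apply, Function.comp_apply, dustSigma_eq_sum_div]
  field_simp

lemma tendsto_dustEntry_div_dustSigma_two (hl : Tendsto l atTop atTop)
    (hratio : Tendsto (fun n : ℕ => (∑ i ∈ Finset.range (l n), c i ^ 2) / (n : ℝ) ^ ((1 : ℝ) / 3))
      atTop (𝓝 1)) (j : ℕ) :
    Tendsto (fun n => dustEntry c (l n) n j / dustSigma c 2 (l n) n) atTop (𝓝 (c j)) := by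
  have h := tendsto_const_nhds (x := c j).div hratio one_ne_zero
  rw [div_one] at h
  refine h.congr' ?_
  filter_upwards [eventually_rpow_one_third_ne_zero, hl.eventually_gt_atTop j] with n hn hj
  rw [Pi.div_apply, dustEntry_of_lt c n hj, dustSigma_eq_sum_div]
  field_simp

end Asymptotics

/-- let `c` be nonincreasing, strictly positive, cube-summable but not
square-summable, `C = Σ_j c_j³`. There exists `l(n) → ∞` with
`Σ_{i<l(n)} c_i² / n^{1/3} → 1`, and for any such choice, with `x^{(n)} = x^{(n, l(n))}`:
(i) `σ₂ → 0`; (ii) `σ₃ / σ₂³ → C`; (iii) `x_j^{(n)} / σ₂ → c_j` for every fixed `j`.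
Thus `κ = 0` with `c ∈ ℓ³ \ ℓ²` arises from the entrance-law hypotheses. -/
theorem dustConfig_entrance_asymptotics (c : ℕ → ℝ) (hmono : Antitone c)
    (hpos : ∀ j, 0 < c j) (hsum3 : Summable (fun j => c j ^ 3))
    (hsum2 : ¬ Summable (fun j => c j ^ 2)) :
    (∃ l : ℕ → ℕ, Tendsto l atTop atTop ∧
      Tendsto (fun n : ℕ => (∑ i ∈ Finset.range (l n), c i ^ 2) / (n : ℝ) ^ ((1 : ℝ) / 3))
        atTop (𝓝 1)) ∧
    ∀ l : ℕ → ℕ, Tendsto l atTop atTop →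
      Tendsto (fun n : ℕ => (∑ i ∈ Finset.range (l n), c i ^ 2) / (n : ℝ) ^ ((1 : ℝ) / 3))
        atTop (𝓝 1) →
      (Tendsto (fun n : ℕ => dustSigma c 2 (l n) n) atTop (𝓝 0) ∧
        Tendsto (fun n : ℕ => dustSigma c 3 (l n) n / (dustSigma c 2 (l n) n) ^ 3) atTop
          (𝓝 (∑' j, c j ^ 3)) ∧
        ∀ j : ℕ,
          Tendsto (fun n : ℕ => dustEntry c (l n) n j / dustSigma c 2 (l n) n) atTop
            (𝓝 (c j))) := by
  have hS_mono : Monotone (fun l => ∑ i ∈ Finset.range l, c i ^ 2) :=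
    monotone_nat_of_le_succ fun l => by simp [Finset.sum_range_succ, sq_nonneg]
  have hS_top : Tendsto (fun l => ∑ i ∈ Finset.range l, c i ^ 2) atTop atTop :=
    (not_summable_iff_tendsto_nat_atTop_of_nonneg fun i => sq_nonneg _).mp hsum2
  have hS_step : ∀ l, ∑ i ∈ Finset.range (l + 1), c i ^ 2 ≤ ∑ i ∈ Finset.range l, c i ^ 2 + c 0 ^ 2 :=
    fun l => by
      rw [Finset.sum_range_succ]
      gcongr
      exacts [(hpos l).le, hmono l.zero_le]
  refine ⟨hS_mono.exists_tendsto_comp_div_one hS_top hS_step tendsto_rpow_one_third_atTop,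
    fun l hl hratio => ⟨tendsto_dustSigma_two_zero hratio,
      tendsto_dustSigma_three_div_cube hsum3.hasSum hl hratio,
      tendsto_dustEntry_div_dustSigma_two hl hratio⟩⟩
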